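/- arXiv:1502.02418 — 9 statements merged into one kernel-verified Lean document; each statement's English description precedes it below -/
import Mathlib

section
/- For all rationals p, q, r, s, the point P₃ = (p²s² + q²r², (p⁶ − q⁶ − r⁶ + s⁶)/2) lies on the elliptic curve E_{p,q,r,s}, i.e., setting x = p²s² + q²r² and y = (p⁶ − q⁶ − r⁶ + s⁶)/2, one has y² = x³ − 3(pqrs)²x + 2(pqrs)³ + (1/4)(p⁶+s⁶−q⁶−r⁶)² − (p³s³+q³r³)². -/
theorem point_P3_on_curve (p q r s : ℚ) :
    ((p ^ 6 - q ^ 6 - r ^ 6 + s ^ 6) / 2) ^ 2 =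
      (p ^ 2 * s ^ 2 + q ^ 2 * r ^ 2) ^ 3
        - 3 * (p * q * r * s) ^ 2 * (p ^ 2 * s ^ 2 + q ^ 2 * r ^ 2)
        + 2 * (p * q * r * s) ^ 3
        + (1 / 4) * (p ^ 6 + s ^ 6 - q ^ 6 - r ^ 6) ^ 2
        - (p ^ 3 * s ^ 3 + q ^ 3 * r ^ 3) ^ 2 := by
  ring
end

section
/- For all rationals p, q, r, s, the point P₁ = (p²q² + r²s², (p⁶ + q⁶ − r⁶ − s⁶)/2) lies on the elliptic curve E_{p,q,r,s}, i.e., setting x = p²q² + r²s² and y = (p⁶ + q⁶ − r⁶ − s⁶)/2, one has y² = x³ − 3(pqrs)²x + 2(pqrs)³ + (1/4)(p⁶+s⁶−q⁶−r⁶)² − (p³s³+q³r³)². -/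
theorem point_P1_on_curve (p q r s : ℚ) :
    ((p ^ 6 + q ^ 6 - r ^ 6 - s ^ 6) / 2) ^ 2 =
      (p ^ 2 * q ^ 2 + r ^ 2 * s ^ 2) ^ 3
        - 3 * (p * q * r * s) ^ 2 * (p ^ 2 * q ^ 2 + r ^ 2 * s ^ 2)
        + 2 * (p * q * r * s) ^ 3
        + (1 / 4) * (p ^ 6 + s ^ 6 - q ^ 6 - r ^ 6) ^ 2
        - (p ^ 3 * s ^ 3 + q ^ 3 * r ^ 3) ^ 2 := by
  ring
end

section
/- For all rationals p, q, r, s, the point P₂ = (p²r² + q²s², (p⁶ − q⁶ + r⁶ − s⁶)/2) lies on the elliptic curve E_{p,q,r,s}, i.e., setting x = p²r² + q²s² and y = (p⁶ − q⁶ + r⁶ − s⁶)/2, one has y² = x³ − 3(pqrs)²x + 2(pqrs)³ + (1/4)(p⁶+s⁶−q⁶−r⁶)² − (p³s³+q³r³)². -/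
theorem point_P2_on_curve (p q r s : ℚ) :
    ((p ^ 6 - q ^ 6 + r ^ 6 - s ^ 6) / 2) ^ 2 =
      (p ^ 2 * r ^ 2 + q ^ 2 * s ^ 2) ^ 3
        - 3 * (p * q * r * s) ^ 2 * (p ^ 2 * r ^ 2 + q ^ 2 * s ^ 2)
        + 2 * (p * q * r * s) ^ 3
        + (1 / 4) * (p ^ 6 + s ^ 6 - q ^ 6 - r ^ 6) ^ 2
        - (p ^ 3 * s ^ 3 + q ^ 3 * r ^ 3) ^ 2 := by
  ring
end

section
/- The specialization of the curve E_{p,q,r,s} at (p, q, r, s) = (1, 1/2, 2, 0) is the elliptic curve y² = x³ + 16248705/16384 over ℚ, and the three points (1/4, 4031/128), (4, 4159/128), and (1, 4033/128) all lie on this curve. -/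
/-- The right-hand side of the Weierstrass equation of the curve `E_{p,q,r,s}`
arising from the Brahmagupta formula, evaluated at abscissa `x`. -/
def brahmaguptaCurveRHS (p q r s x : ℚ) : ℚ :=
  x ^ 3 - 3 * (p * q * r * s) ^ 2 * x + 2 * (p * q * r * s) ^ 3
    + (1 / 4) * (p ^ 6 + s ^ 6 - q ^ 6 - r ^ 6) ^ 2
    - (p ^ 3 * s ^ 3 + q ^ 3 * r ^ 3) ^ 2

theorem specialization_at_1_half_2_0 :
    (∀ x : ℚ, brahmaguptaCurveRHS 1 (1/2) 2 0 x = x ^ 3 + 16248705 / 16384) ∧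
    ((4031 / 128 : ℚ) ^ 2 = (1 / 4 : ℚ) ^ 3 + 16248705 / 16384) ∧
    ((4159 / 128 : ℚ) ^ 2 = (4 : ℚ) ^ 3 + 16248705 / 16384) ∧
    ((4033 / 128 : ℚ) ^ 2 = (1 : ℚ) ^ 3 + 16248705 / 16384) := by
  refine ⟨fun x => by unfold brahmaguptaCurveRHS; ring, by norm_num, by norm_num, by norm_num⟩
end

section
/- For all integers A, B, C, with u, v, p, q defined by u = 10B(A−20B²)(−C+4AB−80B³)(−C²+8ABC−160B³C−20A²B²−400AB⁴+8000B⁶+A³), v = C(10AB−200B³−C)(−C²+8ABC−160B³C−20A²B²−400AB⁴+8000B⁶+A³), p = C(−2880000B⁹+5360AB⁴C−C³+26ABC²−164A²B²C+2A⁴B−49600B⁶C+A³C−520B³C²+240A³B³−19200A²B⁵+416000AB⁷), q = 10B(A−20B²)(−C+4AB−80B³)(C²−20A²B²−400AB⁴+8000B⁶+A³), the following identity holds: uv − pq = 20BC(A−20B²)⁴(−C+4AB−80B³)²·(A³ − 20A²B² − 400AB⁴ + 28ABC + 8000B⁶ + 560B³C − C²). -/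
theorem uv_sub_pq_identity (A B C u v p q : ℤ)
    (hu : u = 10 * B * (A - 20 * B ^ 2) * (-C + 4 * A * B - 80 * B ^ 3)
        * (-C ^ 2 + 8 * A * B * C - 160 * B ^ 3 * C - 20 * A ^ 2 * B ^ 2
            - 400 * A * B ^ 4 + 8000 * B ^ 6 + A ^ 3))
    (hv : v = C * (10 * A * B - 200 * B ^ 3 - C)
        * (-C ^ 2 + 8 * A * B * C - 160 * B ^ 3 * C - 20 * A ^ 2 * B ^ 2
            - 400 * A * B ^ 4 + 8000 * B ^ 6 + A ^ 3))
    (hp : p = C * (-2880000 * B ^ 9 + 5360 * A * B ^ 4 * C - C ^ 3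
        + 26 * A * B * C ^ 2 - 164 * A ^ 2 * B ^ 2 * C + 2 * A ^ 4 * B
        - 49600 * B ^ 6 * C + A ^ 3 * C - 520 * B ^ 3 * C ^ 2
        + 240 * A ^ 3 * B ^ 3 - 19200 * A ^ 2 * B ^ 5 + 416000 * A * B ^ 7))
    (hq : q = 10 * B * (A - 20 * B ^ 2) * (-C + 4 * A * B - 80 * B ^ 3)
        * (C ^ 2 - 20 * A ^ 2 * B ^ 2 - 400 * A * B ^ 4 + 8000 * B ^ 6 + A ^ 3)) :
    u * v - p * q =
      20 * B * C * (A - 20 * B ^ 2) ^ 4 * (-C + 4 * A * B - 80 * B ^ 3) ^ 2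
        * (A ^ 3 - 20 * A ^ 2 * B ^ 2 - 400 * A * B ^ 4 + 28 * A * B * C
            + 8000 * B ^ 6 + 560 * B ^ 3 * C - C ^ 2) := by
  subst hu hv hp hq; ring
end

section
/- Let A, B, C be integers satisfying A³ − 20A²B² − 400AB⁴ + 28ABC + 8000B⁶ + 560B³C − C² = 0. Define u = 10B(A−20B²)(−C+4AB−80B³)(−C²+8ABC−160B³C−20A²B²−400AB⁴+8000B⁶+A³), v = C(10AB−200B³−C)(−C²+8ABC−160B³C−20A²B²−400AB⁴+8000B⁶+A³), p = C(−2880000B⁹+5360AB⁴C−C³+26ABC²−164A²B²C+2A⁴B−49600B⁶C+A³C−520B³C²+240A³B³−19200A²B⁵+416000AB⁷), q = 10B(A−20B²)(−C+4AB−80B³)(C²−20A²B²−400AB⁴+8000B⁶+A³). Then uv = pq. -/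
theorem uv_eq_pq (A B C u v p q : ℤ)
    (hE : A ^ 3 - 20 * A ^ 2 * B ^ 2 - 400 * A * B ^ 4 + 28 * A * B * C
        + 8000 * B ^ 6 + 560 * B ^ 3 * C - C ^ 2 = 0)
    (hu : u = 10 * B * (A - 20 * B ^ 2) * (-C + 4 * A * B - 80 * B ^ 3)
        * (-C ^ 2 + 8 * A * B * C - 160 * B ^ 3 * C - 20 * A ^ 2 * B ^ 2
            - 400 * A * B ^ 4 + 8000 * B ^ 6 + A ^ 3))
    (hv : v = C * (10 * A * B - 200 * B ^ 3 - C)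
        * (-C ^ 2 + 8 * A * B * C - 160 * B ^ 3 * C - 20 * A ^ 2 * B ^ 2
            - 400 * A * B ^ 4 + 8000 * B ^ 6 + A ^ 3))
    (hp : p = C * (-2880000 * B ^ 9 + 5360 * A * B ^ 4 * C - C ^ 3
        + 26 * A * B * C ^ 2 - 164 * A ^ 2 * B ^ 2 * C + 2 * A ^ 4 * B
        - 49600 * B ^ 6 * C + A ^ 3 * C - 520 * B ^ 3 * C ^ 2
        + 240 * A ^ 3 * B ^ 3 - 19200 * A ^ 2 * B ^ 5 + 416000 * A * B ^ 7))
    (hq : q = 10 * B * (A - 20 * B ^ 2) * (-C + 4 * A * B - 80 * B ^ 3)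
        * (C ^ 2 - 20 * A ^ 2 * B ^ 2 - 400 * A * B ^ 4 + 8000 * B ^ 6 + A ^ 3)) :
    u * v = p * q := by
  subst hu hv hp hq
  linear_combination ((3200000) * B ^ 9 * C ^ 3 + (512000000) * B ^ 12 * C ^ 2 + (20480000000) * B ^ 15 * C + (-640000) * A * B ^ 7 * C ^ 3 + (-128000000) * A * B ^ 10 * C ^ 2 + (-6144000000) * A * B ^ 13 * C + (48000) * A ^ 2 * B ^ 5 * C ^ 3 + (12800000) * A ^ 2 * B ^ 8 * C ^ 2 + (768000000) * A ^ 2 * B ^ 11 * C + (-1600) * A ^ 3 * B ^ 3 * C ^ 3 + (-640000) * A ^ 3 * B ^ 6 * C ^ 2 + (-51200000) * A ^ 3 * B ^ 9 * C + (20) * A ^ 4 * B * C ^ 3 + (16000) * A ^ 4 * B ^ 4 * C ^ 2 + (1920000) * A ^ 4 * B ^ 7 * C + (-160) * A ^ 5 * B ^ 2 * C ^ 2 + (-38400) * A ^ 5 * B ^ 5 * C + (320) * A ^ 6 * B ^ 3 * C) * hE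
end

section
/- Let u, v, p, q, r, s be positive rationals satisfying u⁶ + v⁶ + p⁶ + q⁶ = 2(r⁶ + s⁶) and uv = pq. Then the point P₄ = (u²r² + v²s², (u⁶ − v⁶ + r⁶ − s⁶)/2) lies on the elliptic curve E_{p,q,r,s}, i.e., setting x = u²r² + v²s² and y = (u⁶ − v⁶ + r⁶ − s⁶)/2, one has y² = x³ − 3(pqrs)²x + 2(pqrs)³ + (1/4)(p⁶+s⁶−q⁶−r⁶)² − (p³s³+q³r³)². -/
theorem point_P4_on_curve (u v p q r s : ℚ)
    (hu : 0 < u) (hv : 0 < v) (hp : 0 < p) (hq : 0 < q) (hr : 0 < r) (hs : 0 < s)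
    (hsum : u ^ 6 + v ^ 6 + p ^ 6 + q ^ 6 = 2 * (r ^ 6 + s ^ 6))
    (hprod : u * v = p * q) :
    ((u ^ 6 - v ^ 6 + r ^ 6 - s ^ 6) / 2) ^ 2 =
      (u ^ 2 * r ^ 2 + v ^ 2 * s ^ 2) ^ 3
        - 3 * (p * q * r * s) ^ 2 * (u ^ 2 * r ^ 2 + v ^ 2 * s ^ 2)
        + 2 * (p * q * r * s) ^ 3
        + (1 / 4) * (p ^ 6 + s ^ 6 - q ^ 6 - r ^ 6) ^ 2
        - (p ^ 3 * s ^ 3 + q ^ 3 * r ^ 3) ^ 2 := by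
  linear_combination ((u ^ 6 + v ^ 6 - p ^ 6 - q ^ 6) / 4) * hsum +
    (-3 * u ^ 3 * v * r ^ 4 * s ^ 2 - 3 * u ^ 2 * p * q * r ^ 4 * s ^ 2
      - 3 * u * v ^ 3 * r ^ 2 * s ^ 4 - 3 * v ^ 2 * p * q * r ^ 2 * s ^ 4
      - ((u * v) ^ 5 + (u * v) ^ 4 * (p * q) + (u * v) ^ 3 * (p * q) ^ 2
        + (u * v) ^ 2 * (p * q) ^ 3 + (u * v) * (p * q) ^ 4 + (p * q) ^ 5)) * hprod
end

section
/- Let u, v, p, q, r, s be positive rationals satisfying u⁶ + v⁶ + p⁶ + q⁶ = 2(r⁶ + s⁶) and uv = pq. Then the point P₅ = (u²s² + v²r², (u⁶ − v⁶ − r⁶ + s⁶)/2) lies on the elliptic curve E_{p,q,r,s}, i.e., setting x = u²s² + v²r² and y = (u⁶ − v⁶ − r⁶ + s⁶)/2, one has y² = x³ − 3(pqrs)²x + 2(pqrs)³ + (1/4)(p⁶+s⁶−q⁶−r⁶)² − (p³s³+q³r³)². -/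
theorem point_P5_on_curve (u v p q r s : ℚ)
    (hu : 0 < u) (hv : 0 < v) (hp : 0 < p) (hq : 0 < q) (hr : 0 < r) (hs : 0 < s)
    (hsum : u ^ 6 + v ^ 6 + p ^ 6 + q ^ 6 = 2 * (r ^ 6 + s ^ 6))
    (hprod : u * v = p * q) :
    ((u ^ 6 - v ^ 6 - r ^ 6 + s ^ 6) / 2) ^ 2 =
      (u ^ 2 * s ^ 2 + v ^ 2 * r ^ 2) ^ 3
        - 3 * (p * q * r * s) ^ 2 * (u ^ 2 * s ^ 2 + v ^ 2 * r ^ 2)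
        + 2 * (p * q * r * s) ^ 3
        + (1 / 4) * (p ^ 6 + s ^ 6 - q ^ 6 - r ^ 6) ^ 2
        - (p ^ 3 * s ^ 3 + q ^ 3 * r ^ 3) ^ 2 := by
  linear_combination
    (-(p ^ 6 + q ^ 6 + 2 * (r ^ 6 + s ^ 6) - u ^ 6 - v ^ 6) / 4 + (s ^ 6 + r ^ 6) / 2) * hsum +
    (-3 * r ^ 2 * s ^ 2 * (u ^ 2 * s ^ 2 + v ^ 2 * r ^ 2) * (p * q + u * v)
      - ((p * q) ^ 5 + (p * q) ^ 4 * (u * v) + (p * q) ^ 3 * (u * v) ^ 2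
        + (p * q) ^ 2 * (u * v) ^ 3 + (p * q) * (u * v) ^ 4 + (u * v) ^ 5)) * hprod
end

section
/- Let u, p, q, r, s be rationals with u ≠ 0 and define v = pq/u. Then u²·r² + v²·s² and (u⁶ − v⁶ + r⁶ − s⁶)/2 satisfy the equation of E_{p,q,r,s} if and only if (q⁶ − u⁶)·(p⁶ − u⁶)·(p⁶q⁶ + p⁶u⁶ − 2u⁶r⁶ − 2s⁶u⁶ + q⁶u⁶ + u¹²) = 0; that is, with x = u²r² + v²s² and y = (u⁶ − v⁶ + r⁶ − s⁶)/2, the quantity y² − x³ + 3(pqrs)²x − 2(pqrs)³ − (1/4)(p⁶+s⁶−q⁶−r⁶)² + (p³s³+q³r³)² vanishes exactly when the displayed product vanishes. -/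
theorem point_P4_criterion (u p q r s : ℚ) (hu : u ≠ 0) (v : ℚ) (hv : v = p * q / u) :
    (let x := u ^ 2 * r ^ 2 + v ^ 2 * s ^ 2
     let y := (u ^ 6 - v ^ 6 + r ^ 6 - s ^ 6) / 2
     y ^ 2 - x ^ 3 + 3 * (p * q * r * s) ^ 2 * x - 2 * (p * q * r * s) ^ 3
       - (1 / 4) * (p ^ 6 + s ^ 6 - q ^ 6 - r ^ 6) ^ 2
       + (p ^ 3 * s ^ 3 + q ^ 3 * r ^ 3) ^ 2 = 0) ↔
    (q ^ 6 - u ^ 6) * (p ^ 6 - u ^ 6)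
      * (p ^ 6 * q ^ 6 + p ^ 6 * u ^ 6 - 2 * u ^ 6 * r ^ 6 - 2 * s ^ 6 * u ^ 6
          + q ^ 6 * u ^ 6 + u ^ 12) = 0 := by
  subst hv
  simp only []
  have h4 : (4 : ℚ) * u ^ 12 ≠ 0 := by
    have : u ^ 12 ≠ 0 := pow_ne_zero _ hu
    simp [this]
  have key : (q ^ 6 - u ^ 6) * (p ^ 6 - u ^ 6)
      * (p ^ 6 * q ^ 6 + p ^ 6 * u ^ 6 - 2 * u ^ 6 * r ^ 6 - 2 * s ^ 6 * u ^ 6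
          + q ^ 6 * u ^ 6 + u ^ 12)
      = (4 * u ^ 12) *
      (((u ^ 6 - (p * q / u) ^ 6 + r ^ 6 - s ^ 6) / 2) ^ 2
        - (u ^ 2 * r ^ 2 + (p * q / u) ^ 2 * s ^ 2) ^ 3
        + 3 * (p * q * r * s) ^ 2 * (u ^ 2 * r ^ 2 + (p * q / u) ^ 2 * s ^ 2)
        - 2 * (p * q * r * s) ^ 3
        - (1 / 4) * (p ^ 6 + s ^ 6 - q ^ 6 - r ^ 6) ^ 2
        + (p ^ 3 * s ^ 3 + q ^ 3 * r ^ 3) ^ 2) := by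
    field_simp
    ring
  rw [key, mul_eq_zero]
  simp [h4]
end
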